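/- arXiv:2412.17233 — 3 statements merged into one kernel-verified Lean document; each statement's English description precedes it below -/
import Mathlib

section
/- For every t = (t_1,…,t_N) ∈ ℝ^N, writing [X₁(t) | X₂(t)] for the n×2n matrix formed by the first n rows of x_{i_1}(t_1)⋯x_{i_N}(t_N) split into two n×n blocks, the block X₁(t) is upper triangular with all diagonal entries equal to 1 (in particular invertible with det X₁(t) = 1), and the matrix A(t) := X₁(t)⁻¹·X₂(t) is skew-symmetric, i.e. A(t)ᵀ = −A(t). -/
noncomputable section

open Matrix

/-- `N = n(n-1)/2`, the number of parameters. -/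
def Npar (n : ℕ) : ℕ := n * (n - 1) / 2

/-- The decreasing run `a, a-1, …, b` (empty if `b > a`). -/
def decRun (a b : ℕ) : List ℕ := (List.range' b (a + 1 - b)).reverse

/-- The index sequence `(i_1, …, i_N)`: for `m = 1, …, ⌊n/2⌋` (here `m` is 0-based, so
`m+1` is the 1-based block index), concatenate `n`, the run `n-2, …, 2(m+1)-1`, and the
run `n-1, …, 2(m+1)`. -/
def wordD (n : ℕ) : List ℕ :=
  ((List.range (n / 2)).map (fun m =>
    n :: (decRun (n - 2) (2 * m + 1) ++ decRun (n - 1) (2 * m + 2)))).flatten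

/-- The matrix `x_i(t)` (index `i` is 1-based, matrix positions are 1-based in the paper,
0-based here). -/
def xMat (n : ℕ) (i : ℕ) (t : ℝ) : Matrix (Fin (2 * n)) (Fin (2 * n)) ℝ :=
  Matrix.of fun p q =>
    (if (p : ℕ) = (q : ℕ) then 1 else 0) +
    (if i < n then
        (if (p : ℕ) + 1 = i ∧ (q : ℕ) + 1 = i + 1 then t else 0)
      + (if (p : ℕ) + 1 = n + i + 1 ∧ (q : ℕ) + 1 = n + i then -t else 0)
     else
        (if (p : ℕ) + 1 = n - 1 ∧ (q : ℕ) + 1 = 2 * n then t else 0)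
      + (if (p : ℕ) + 1 = n ∧ (q : ℕ) + 1 = 2 * n - 1 then -t else 0))

/-- The product `x_{i_1}(t_1) ⋯ x_{i_N}(t_N)`; the parameter `t l` plays the role of
`t_{l+1}`. -/
def prodX (n : ℕ) (t : ℕ → ℝ) : Matrix (Fin (2 * n)) (Fin (2 * n)) ℝ :=
  ((List.range (Npar n)).map (fun l => xMat n ((wordD n).getD l 0) (t l))).prod

/-- The first block `X₁(t)` of the first `n` rows of the product. -/
def X1 (n : ℕ) (t : ℕ → ℝ) : Matrix (Fin n) (Fin n) ℝ :=
  Matrix.of fun p q =>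
    prodX n t ⟨(p : ℕ), by have := p.isLt; omega⟩ ⟨(q : ℕ), by have := q.isLt; omega⟩

/-- The second block `X₂(t)` of the first `n` rows of the product. -/
def X2 (n : ℕ) (t : ℕ → ℝ) : Matrix (Fin n) (Fin n) ℝ :=
  Matrix.of fun p q =>
    prodX n t ⟨(p : ℕ), by have := p.isLt; omega⟩ ⟨n + (q : ℕ), by have := q.isLt; omega⟩

/-- The skew-symmetric matrix `A(t) = X₁(t)⁻¹ · X₂(t)`. -/
def Amat (n : ℕ) (t : ℕ → ℝ) : Matrix (Fin n) (Fin n) ℝ := (X1 n t)⁻¹ * X2 n t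

/-- The set `S_n^{>0}` of totally positive skew-symmetric matrices. -/
def Spos (n : ℕ) : Set (Matrix (Fin n) (Fin n) ℝ) :=
  { A | ∃ t : ℕ → ℝ, (∀ i < Npar n, 0 < t i) ∧ A = Amat n t }

/-- The signed minor `M_{j,k}(A)`: `(-1)^{jk}` times the determinant of the submatrix of `A`
with (1-based) rows `{1,…,n-k-1} ∪ {n-k+j,…,n}` and columns `{1,…,n-j}`. -/
def Mminor (n j k : ℕ) (A : Matrix (Fin n) (Fin n) ℝ) : ℝ :=
  (-1 : ℝ) ^ (j * k) *
    Matrix.det (Matrix.of fun (p q : Fin (n - j)) =>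
      A (if (p : ℕ) < n - k - 1
          then ⟨(p : ℕ), by have := p.isLt; omega⟩
          else ⟨(p : ℕ) + j, by have := p.isLt; omega⟩)
        ⟨(q : ℕ), by have := q.isLt; omega⟩)

/-- The Pfaffian of an `m × m` matrix (intended for `m` even):
`Pf(B) = (1/(2^{m/2} (m/2)!)) Σ_σ sgn(σ) Π_i B_{σ(2i-1), σ(2i)}`. -/
def Pfaff {m : ℕ} (B : Matrix (Fin m) (Fin m) ℝ) : ℝ :=
  (1 / ((2 : ℝ) ^ (m / 2) * (Nat.factorial (m / 2) : ℝ))) *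
    ∑ σ : Equiv.Perm (Fin m), ((Equiv.Perm.sign σ : ℤ) : ℝ) *
      ∏ i : Fin (m / 2),
        B (σ ⟨2 * (i : ℕ), by have := i.isLt; omega⟩)
          (σ ⟨2 * (i : ℕ) + 1, by have := i.isLt; omega⟩)

/-- `Pf_I(A)`: the Pfaffian of the submatrix of `A` with rows and columns indexed by `I`
in increasing order. -/
def PfI {n : ℕ} (A : Matrix (Fin n) (Fin n) ℝ) (I : Finset (Fin n)) : ℝ :=
  Pfaff (Matrix.of fun (p q : Fin I.card) =>
    A ((I.orderIsoOfFin rfl p : Fin n)) ((I.orderIsoOfFin rfl q : Fin n)))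

/-- `sgn(I,[n]) = (-1)^{(Σ_{i∈I} i) - |I|(|I|+1)/2}` (the elements of `I` are 1-based, so a
0-based element `i` contributes `i+1`; the natural subtraction agrees with the integer one
since the sum of `|I|` distinct positive integers is at least `|I|(|I|+1)/2`). -/
def sgnSet {n : ℕ} (I : Finset (Fin n)) : ℝ :=
  (-1 : ℝ) ^ ((∑ i ∈ I, ((i : ℕ) + 1)) - I.card * (I.card + 1) / 2)

/-- The block matrix `[Id_n | A]`. -/
def IdA {n : ℕ} (A : Matrix (Fin n) (Fin n) ℝ) : Matrix (Fin n) (Fin (2 * n)) ℝ :=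
  Matrix.of fun p q =>
    if h : (q : ℕ) < n then (if (p : ℕ) = (q : ℕ) then 1 else 0)
    else A p ⟨(q : ℕ) - n, by have := q.isLt; omega⟩

/-- The full word `(j_1, …, j_{2N})`: `1, 2,1, 3,2,1, …, n-1,…,1` followed by `(i_1,…,i_N)`. -/
def wordFull (n : ℕ) : List ℕ :=
  (((List.range n).map (fun r => decRun r 1)).flatten) ++ wordD n

/-- `z(ε) = x_{j_1}(ε) ⋯ x_{j_{2N}}(ε)`. -/
def zeps (n : ℕ) (ε : ℝ) : Matrix (Fin (2 * n)) (Fin (2 * n)) ℝ :=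
  ((wordFull n).map (fun i => xMat n i ε)).prod

/-- `Z(ε) = z(ε)ᵀ · z(ε)`. -/
def Zeps (n : ℕ) (ε : ℝ) : Matrix (Fin (2 * n)) (Fin (2 * n)) ℝ :=
  (zeps n ε)ᵀ * zeps n ε

/-- First block `Y₁(ε)` of `[Id_n | A] · Z(ε)`. -/
def Y1 {n : ℕ} (A : Matrix (Fin n) (Fin n) ℝ) (ε : ℝ) : Matrix (Fin n) (Fin n) ℝ :=
  Matrix.of fun p q => (IdA A * Zeps n ε) p ⟨(q : ℕ), by have := q.isLt; omega⟩

/-- Second block `Y₂(ε)` of `[Id_n | A] · Z(ε)`. -/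
def Y2 {n : ℕ} (A : Matrix (Fin n) (Fin n) ℝ) (ε : ℝ) : Matrix (Fin n) (Fin n) ℝ :=
  Matrix.of fun p q => (IdA A * Zeps n ε) p ⟨n + (q : ℕ), by have := q.isLt; omega⟩

/-- The simple generators `s_i` of the Weyl group `W` of `SO(2n)`, as permutations of
`{1,…,2n}` (0-based here): for `1 ≤ i ≤ n-1`, `s_i = (i,i+1)(n+i,n+i+1)`; for `i = n`,
`s_n = (n,2n-1)(n-1,2n)`. -/
def sGen (n : ℕ) (i : ℕ) : Equiv.Perm (Fin (2 * n)) :=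
  if h : 1 ≤ i ∧ i ≤ n - 1 ∧ 2 ≤ n then
    Equiv.swap ⟨i - 1, by omega⟩ ⟨i, by omega⟩ *
      Equiv.swap ⟨n + i - 1, by omega⟩ ⟨n + i, by omega⟩
  else if h2 : i = n ∧ 2 ≤ n then
    Equiv.swap ⟨n - 1, by omega⟩ ⟨2 * n - 2, by omega⟩ *
      Equiv.swap ⟨n - 2, by omega⟩ ⟨2 * n - 1, by omega⟩
  else 1

/-- Membership in the Weyl group `W`: `σ(n+i) ≡ n + σ(i) (mod 2n)` for all `1 ≤ i ≤ n`,
and the number of `i ∈ {1,…,n}` with `σ(i) > n` is even. (All positions are 0-based; a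
0-based value `v` corresponds to the 1-based value `v+1`.) -/
def inW (n : ℕ) (σ : Equiv.Perm (Fin (2 * n))) : Prop :=
  (∀ i : Fin n,
    ((σ ⟨n + (i : ℕ), by have := i.isLt; omega⟩ : Fin (2 * n)) : ℕ)
      ≡ n + ((σ ⟨(i : ℕ), by have := i.isLt; omega⟩ : Fin (2 * n)) : ℕ) [MOD 2 * n]) ∧
  Even (Finset.univ.filter (fun i : Fin n =>
    n ≤ ((σ ⟨(i : ℕ), by have := i.isLt; omega⟩ : Fin (2 * n)) : ℕ))).card

/-- `I_w = {i ∈ {1,…,n} : w(i) > n}`, as a finset of `Fin n` (0-based). -/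
def Iset (n : ℕ) (σ : Equiv.Perm (Fin (2 * n))) : Finset (Fin n) :=
  Finset.univ.filter (fun i : Fin n =>
    n ≤ ((σ ⟨(i : ℕ), by have := i.isLt; omega⟩ : Fin (2 * n)) : ℕ))

/-- The parabolic subgroup `W_{[n-1]}` generated by `s_1, …, s_{n-1}`. -/
def Wpar (n : ℕ) : Subgroup (Equiv.Perm (Fin (2 * n))) :=
  Subgroup.closure { σ | ∃ i, 1 ≤ i ∧ i ≤ n - 1 ∧ σ = sGen n i }

/-- The standard basis vector `e_i` of `ℝ^{2n}` (with `i : Fin n` 0-based, sitting in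
position `i` of the first block). -/
def evec (n : ℕ) (i : Fin n) : Fin (2 * n) → ℝ :=
  Pi.single ⟨(i : ℕ), by have := i.isLt; omega⟩ 1

/-- The standard basis vector `f_j` of `ℝ^{2n}` (position `n + j`). -/
def fvec (n : ℕ) (j : Fin n) : Fin (2 * n) → ℝ :=
  Pi.single ⟨n + (j : ℕ), by have := j.isLt; omega⟩ 1

/-- `f = ι(f_1)⋯ι(f_n)` in the Clifford algebra. -/
def fElt {n : ℕ} (Q : QuadraticForm ℝ (Fin (2 * n) → ℝ)) : CliffordAlgebra Q :=
  (List.ofFn (fun j : Fin n => CliffordAlgebra.ι Q (fvec n j))).prod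

/-- `e_S = ι(e_{l_1})⋯ι(e_{l_s})` where `l_1 < ⋯ < l_s` enumerates `S`. -/
def eProd {n : ℕ} (Q : QuadraticForm ℝ (Fin (2 * n) → ℝ)) (S : Finset (Fin n)) :
    CliffordAlgebra Q :=
  ((S.sort (· ≤ ·)).map (fun l => CliffordAlgebra.ι Q (evec n l))).prod

/-- `h = Π_{i=1}^n ι(e_i + Σ_j A_{ij} f_j)` (product in increasing order of `i`). -/
def hElt {n : ℕ} (Q : QuadraticForm ℝ (Fin (2 * n) → ℝ)) (A : Matrix (Fin n) (Fin n) ℝ) :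
    CliffordAlgebra Q :=
  (List.ofFn (fun i : Fin n =>
    CliffordAlgebra.ι Q (evec n i + ∑ j : Fin n, A i j • fvec n j))).prod

/-- The sorted list of the (1-based) elements of `S ⊆ {1,…,n}`. -/
def valsOf {n : ℕ} (S : Finset (Fin n)) : List ℕ :=
  (S.sort (· ≤ ·)).map (fun i => (i : ℕ) + 1)

/-- The word `w_1 w_2 ⋯ w_r` where
`w_m = s_n (s_{n-2}⋯s_{i_{2m-1}}) (s_{n-1}⋯s_{i_{2m}})` and `vals` lists `i_1 < i_2 < ⋯`
(1-based); `m` is 0-based here. -/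
def uWord (n r : ℕ) (vals : List ℕ) : List ℕ :=
  ((List.range r).map (fun m =>
    n :: (decRun (n - 2) (vals.getD (2 * m) 0) ++ decRun (n - 1) (vals.getD (2 * m + 1) 0)))).flatten

/-- The permutation `u = w_1 w_2 ⋯ w_r`. -/
def uPerm (n r : ℕ) (vals : List ℕ) : Equiv.Perm (Fin (2 * n)) :=
  ((uWord n r vals).map (sGen n)).prod

/-- `L = r + Σ_{m=1}^{r} ((n-1-i_{2m-1}) + (n-i_{2m}))`. -/
def Lval (n r : ℕ) (vals : List ℕ) : ℕ :=
  r + ∑ m ∈ Finset.range r, ((n - 1 - vals.getD (2 * m) 0) + (n - vals.getD (2 * m + 1) 0))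

/-!
Reindex `Fin (2n)` as `Fin n ⊕ Fin n`. Each `x_i(t)` is `1 + t N` with `N = E_{ab} - E_{b̄ā}` a
square-zero root vector of the Lie algebra of `J = [[0, 1], [1, 0]]`, so `x_i(t) J x_i(t)ᵀ = J`;
moreover `x_i(t)` has vanishing lower-left block and unipotent upper triangular upper-left block.
These properties are stable under products, so the product `g = [[X₁, X₂], [0, X₄]]` has
`X₁` unipotent upper triangular, and the upper-left block of `g J gᵀ = J` reads
`X₁ X₂ᵀ + X₂ X₁ᵀ = 0`, which says that `X₁⁻¹ X₂` is skew-symmetric.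
-/

namespace Matrix

variable {ι R : Type*} [CommRing R]

def halfLevel : ι ⊕ ι → WithTop ι := Sum.elim (↑) fun _ => ⊤

lemma halfLevel_eq_inl_iff {k : ι ⊕ ι} {p : ι} :
    halfLevel k = halfLevel (.inl p) ↔ k = .inl p := by
  rcases k with k | k <;> simp [halfLevel]

lemma BlockTriangular.mul_apply_self {m α : Type*} [Fintype m] [LinearOrder α] {b : m → α}
    {M N : Matrix m m R} (hM : M.BlockTriangular b) (hN : N.BlockTriangular b) {p : m}
    (hp : ∀ k, b k = b p → k = p) : (M * N) p p = M p p * N p p := by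
  refine Fintype.sum_eq_single p fun k hk => ?_
  rcases lt_trichotomy (b k) (b p) with h | h | h
  · simp [hM h]
  · exact absurd (hp k h) hk
  · simp [hN h]

lemma one_add_smul_mul_mul_transpose {κ : Type*} [Fintype κ] [DecidableEq κ]
    {J N : Matrix κ κ R} (hNJ : N * J + J * Nᵀ = 0) (hN : N * N = 0) (t : R) :
    (1 + t • N) * J * (1 + t • N)ᵀ = J := by
  have hJN : J * Nᵀ = -(N * J) := eq_neg_of_add_eq_zero_right hNJ
  have hNJN : N * J * Nᵀ = 0 := by
    rw [Matrix.mul_assoc, hJN, mul_neg, ← Matrix.mul_assoc, hN, zero_mul, neg_zero]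
  calc (1 + t • N) * J * (1 + t • N)ᵀ
      = J + t • (N * J + J * Nᵀ) + (t * t) • (N * J * Nᵀ) := by
        simp only [transpose_add, transpose_one, transpose_smul, add_mul, mul_add, one_mul,
          mul_one, Matrix.smul_mul, Matrix.mul_smul, smul_add, smul_smul, Matrix.mul_assoc]
        abel
    _ = J := by rw [hNJ, hNJN]; simp

lemma transpose_nonsing_inv_mul_eq_neg {m : Type*} [Fintype m] [DecidableEq m]
    {A B : Matrix m m R} (hA : IsUnit A.det) (h : A * Bᵀ + B * Aᵀ = 0) :
    (A⁻¹ * B)ᵀ = -(A⁻¹ * B) := by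
  have hAt : IsUnit Aᵀ.det := by rwa [det_transpose]
  calc (A⁻¹ * B)ᵀ = A⁻¹ * (A * Bᵀ) * Aᵀ⁻¹ := by
        rw [transpose_mul, transpose_nonsing_inv, nonsing_inv_mul_cancel_left _ _ hA]
    _ = A⁻¹ * -(B * Aᵀ) * Aᵀ⁻¹ := by rw [eq_neg_of_add_eq_zero_left h]
    _ = -(A⁻¹ * B) := by
        simp only [Matrix.mul_neg, Matrix.neg_mul, Matrix.mul_assoc, mul_nonsing_inv _ hAt,
          Matrix.mul_one]

variable [DecidableEq ι]

def splitForm (ι R : Type*) [DecidableEq ι] [CommRing R] : Matrix (ι ⊕ ι) (ι ⊕ ι) R :=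
  fromBlocks 0 1 1 0

lemma splitForm_apply (a b : ι ⊕ ι) : splitForm ι R a b = if a.swap = b then 1 else 0 := by
  rcases a with a | a <;> rcases b with b | b <;> simp [splitForm, one_apply]

lemma transpose_splitForm : (splitForm ι R)ᵀ = splitForm ι R := by
  simp [splitForm, fromBlocks_transpose]

/-- A root vector of the orthogonal Lie algebra of `splitForm`. -/
def soRoot (a b : ι ⊕ ι) : Matrix (ι ⊕ ι) (ι ⊕ ι) R :=
  single a b 1 - single b.swap a.swap 1

lemma soRoot_apply_self {a b : ι ⊕ ι} (hab : a ≠ b) (p : ι ⊕ ι) :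
    soRoot (R := R) a b p p = 0 := by
  have hab' : b.swap ≠ a.swap := fun h => hab (Sum.swap_leftInverse.injective h).symm
  have h₁ : ¬(a = p ∧ b = p) := fun h => hab (h.1.trans h.2.symm)
  have h₂ : ¬(b.swap = p ∧ a.swap = p) := fun h => hab' (h.1.trans h.2.symm)
  simp [soRoot, h₁, h₂]

variable [Fintype ι]

lemma single_mul_splitForm (a b : ι ⊕ ι) (c : R) :
    single a b c * splitForm ι R = single a b.swap c := by
  ext p q
  by_cases hp : a = p
  · subst hp; simp [splitForm_apply, single_apply]
  · simp [single_mul_apply_of_ne _ _ _ _ _ (Ne.symm hp), hp]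

lemma splitForm_mul_single (a b : ι ⊕ ι) (c : R) :
    splitForm ι R * single a b c = single a.swap b c := by
  rw [← transpose_transpose (splitForm ι R * _), transpose_mul, transpose_single,
    transpose_splitForm, single_mul_splitForm, transpose_single]

lemma soRoot_mul_splitForm_add (a b : ι ⊕ ι) :
    soRoot a b * splitForm ι R + splitForm ι R * (soRoot a b)ᵀ = 0 := by
  simp only [soRoot, transpose_sub, transpose_single, sub_mul, mul_sub, single_mul_splitForm,
    splitForm_mul_single, Sum.swap_swap]
  abel

lemma soRoot_mul_self {a b : ι ⊕ ι} (hab : a ≠ b) : soRoot (R := R) a b * soRoot a b = 0 := by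
  have hbb : b ≠ b.swap := by rcases b <;> simp
  have haa : a.swap ≠ a := by rcases a <;> simp
  have hba : a.swap ≠ b.swap := fun h => hab (Sum.swap_leftInverse.injective h)
  simp [soRoot, sub_mul, mul_sub, single_mul_single_of_ne, hab.symm, hbb, haa, hba]

lemma toBlocks₁₁_mul_splitForm_mul_transpose (g : Matrix (ι ⊕ ι) (ι ⊕ ι) R) :
    (g * splitForm ι R * gᵀ).toBlocks₁₁ =
      g.toBlocks₁₁ * g.toBlocks₁₂ᵀ + g.toBlocks₁₂ * g.toBlocks₁₁ᵀ := by
  conv_lhs => rw [← fromBlocks_toBlocks g]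
  simp [splitForm, fromBlocks_transpose, fromBlocks_multiply, add_comm]

variable [LinearOrder ι]

/-- Block triangularity for `halfLevel` says `g = [[X₁, X₂], [0, X₄]]` with `X₁` upper
triangular; the group is the maximal unipotent subgroup of the orthogonal group of `splitForm`. -/
def splitUnipotent (ι R : Type*) [DecidableEq ι] [Fintype ι] [LinearOrder ι] [CommRing R] :
    Submonoid (Matrix (ι ⊕ ι) (ι ⊕ ι) R) where
  carrier := {g | g.BlockTriangular halfLevel ∧ (∀ p, g (.inl p) (.inl p) = 1) ∧
    g * splitForm ι R * gᵀ = splitForm ι R}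
  one_mem' := ⟨blockTriangular_one, fun _ => one_apply_eq _, by simp⟩
  mul_mem' := by
    rintro g h ⟨hgt, hgd, hgf⟩ ⟨hht, hhd, hhf⟩
    refine ⟨hgt.mul hht, fun p => ?_, ?_⟩
    · rw [hgt.mul_apply_self hht fun k => halfLevel_eq_inl_iff.1, hgd, hhd, one_mul]
    · calc g * h * splitForm ι R * (g * h)ᵀ = g * (h * splitForm ι R * hᵀ) * gᵀ := by
            simp only [transpose_mul, Matrix.mul_assoc]
        _ = splitForm ι R := by rw [hhf, hgf]

lemma one_add_smul_soRoot_mem {a b : ι ⊕ ι} (hab : halfLevel a < halfLevel b)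
    (hba : halfLevel b.swap ≤ halfLevel a.swap) (t : R) :
    1 + t • soRoot a b ∈ splitUnipotent ι R := by
  have hne : a ≠ b := by rintro rfl; exact hab.false
  have hroot : (soRoot a b : Matrix _ _ R).BlockTriangular halfLevel :=
    (blockTriangular_single hab.le 1).sub (blockTriangular_single hba 1)
  refine ⟨blockTriangular_one.add fun i j h => ?_, fun p => ?_, ?_⟩
  · simp [hroot h]
  · simp [soRoot_apply_self hne]
  · exact one_add_smul_mul_mul_transpose (soRoot_mul_splitForm_add a b) (soRoot_mul_self hne) t

namespace splitUnipotent

variable {g : Matrix (ι ⊕ ι) (ι ⊕ ι) R}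

lemma toBlocks₁₁_isUpperTriangular (hg : g ∈ splitUnipotent ι R) :
    g.toBlocks₁₁.IsUpperTriangular :=
  fun _ _ hij => hg.1 (WithTop.coe_lt_coe.2 hij)

lemma toBlocks₁₁_apply_self (hg : g ∈ splitUnipotent ι R) (p : ι) :
    g.toBlocks₁₁ p p = 1 :=
  hg.2.1 p

lemma toBlocks₁₁_mul_transpose_add (hg : g ∈ splitUnipotent ι R) :
    g.toBlocks₁₁ * g.toBlocks₁₂ᵀ + g.toBlocks₁₂ * g.toBlocks₁₁ᵀ = 0 := by
  rw [← toBlocks₁₁_mul_splitForm_mul_transpose, hg.2.2]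
  rfl

end splitUnipotent

end Matrix

def toHalves (n : ℕ) :
    Matrix (Fin (2 * n)) (Fin (2 * n)) ℝ ≃+* Matrix (Fin n ⊕ Fin n) (Fin n ⊕ Fin n) ℝ :=
  reindexRingEquiv ℝ (finSumFinEquiv.trans (finCongr (two_mul n).symm)).symm

lemma toHalves_xMat_of_lt {n i : ℕ} (hi : 1 ≤ i) (hin : i < n) (t : ℝ) :
    toHalves n (xMat n i t) =
      1 + t • soRoot (.inl ⟨i - 1, by omega⟩) (.inl ⟨i, hin⟩) := by
  ext (p | p) (q | q)
  all_goals
    have := p.isLt; have := q.isLt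
    simp [toHalves, xMat, soRoot, single_apply, one_apply, hin, Fin.ext_iff]
    split_ifs <;> first | ring1 | (exfalso; omega)

lemma toHalves_xMat_of_le {n i : ℕ} (hn : 2 ≤ n) (hin : n ≤ i) (t : ℝ) :
    toHalves n (xMat n i t) =
      1 + t • soRoot (.inl ⟨n - 2, by omega⟩) (.inr ⟨n - 1, by omega⟩) := by
  ext (p | p) (q | q)
  all_goals
    have := p.isLt; have := q.isLt
    simp [toHalves, xMat, soRoot, single_apply, one_apply, hin.not_gt, Fin.ext_iff]
    split_ifs <;> first | ring1 | (exfalso; omega)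

open Finset in
lemma sum_range_div_two_one_add_two_mul_sub (n : ℕ) :
    ∑ m ∈ range (n / 2), (1 + 2 * (n - 2 * m - 2)) = n * (n - 1) / 2 := by
  induction n using Nat.twoStepInduction with
  | zero => simp
  | one => simp
  | more n ih _ =>
    rw [show (n + 2) / 2 = n / 2 + 1 by omega, sum_range_succ',
      sum_congr rfl fun m _ =>
        show 1 + 2 * (n + 2 - 2 * (m + 1) - 2) = 1 + 2 * (n - 2 * m - 2) by omega, ih]
    have : (n + 2) * (n + 2 - 1) = n * (n - 1) + 2 * (2 * n + 1) := by
      rcases n with _ | n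
      · rfl
      · simp only [Nat.add_sub_cancel, show n + 1 + 2 - 1 = n + 2 by omega]; ring
    omega

lemma length_wordD (n : ℕ) : (wordD n).length = Npar n := by
  rw [wordD, List.length_flatten, List.map_map, Npar, ← sum_range_div_two_one_add_two_mul_sub]
  simp only [Finset.sum_eq_multiset_sum, Finset.range_val, Multiset.range, Multiset.map_coe,
    Multiset.sum_coe]
  congr 1
  refine List.map_congr_left fun m hm => ?_
  have := List.mem_range.1 hm
  simp [decRun]
  omega

lemma one_le_and_two_le_of_mem_wordD {n i : ℕ} (hi : i ∈ wordD n) : 1 ≤ i ∧ 2 ≤ n := by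
  simp only [wordD, List.mem_flatten, List.mem_map, List.mem_range] at hi
  obtain ⟨_, ⟨m, hm, rfl⟩, hil⟩ := hi
  simp only [decRun, List.mem_cons, List.mem_append, List.mem_reverse, List.mem_range'] at hil
  omega

lemma toHalves_xMat_mem {n i : ℕ} (hi : 1 ≤ i) (hn : 2 ≤ n) (t : ℝ) :
    toHalves n (xMat n i t) ∈ splitUnipotent (Fin n) ℝ := by
  rcases lt_or_ge i n with hin | hin
  · rw [toHalves_xMat_of_lt hi hin]
    exact one_add_smul_soRoot_mem (by simp [halfLevel]; omega) (by simp [halfLevel]) t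
  · rw [toHalves_xMat_of_le hn hin]
    exact one_add_smul_soRoot_mem (by simp [halfLevel]) (by simp [halfLevel]) t

lemma toHalves_prodX_mem (n : ℕ) (t : ℕ → ℝ) :
    toHalves n (prodX n t) ∈ splitUnipotent (Fin n) ℝ := by
  rw [prodX, map_list_prod, List.map_map]
  refine Submonoid.list_prod_mem _ fun g hg => ?_
  obtain ⟨l, hl, rfl⟩ := List.mem_map.1 hg
  -- `getD` falls back to `x_0`, which does not preserve the form.
  have hmem : (wordD n).getD l 0 ∈ wordD n := by
    rw [List.getD_eq_getElem _ _ (by rw [length_wordD]; exact List.mem_range.1 hl)]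
    exact List.getElem_mem _
  obtain ⟨hi, hn⟩ := one_le_and_two_le_of_mem_wordD hmem
  exact toHalves_xMat_mem hi hn (t l)

theorem X1_triangular_and_Amat_skew_general (n : ℕ) (t : ℕ → ℝ) :
    (∀ p q : Fin n, q < p → X1 n t p q = 0) ∧
    (∀ p : Fin n, X1 n t p p = 1) ∧
    (X1 n t).det = 1 ∧ IsUnit (X1 n t) ∧ (Amat n t)ᵀ = -(Amat n t) := by
  obtain ⟨g, hg, hX1, hX2⟩ : ∃ g ∈ splitUnipotent (Fin n) ℝ,
      X1 n t = g.toBlocks₁₁ ∧ X2 n t = g.toBlocks₁₂ :=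
    ⟨_, toHalves_prodX_mem n t, rfl, rfl⟩
  rw [Amat, hX1, hX2]
  have hupper := splitUnipotent.toBlocks₁₁_isUpperTriangular hg
  have hdiag := splitUnipotent.toBlocks₁₁_apply_self hg
  have hdet : g.toBlocks₁₁.det = 1 := by simp [det_of_isUpperTriangular hupper, hdiag]
  have hunit : IsUnit g.toBlocks₁₁.det := by simp [hdet]
  refine ⟨fun p q => @hupper p q, hdiag, hdet, (isUnit_iff_isUnit_det _).2 hunit, ?_⟩
  exact transpose_nonsing_inv_mul_eq_neg hunit (splitUnipotent.toBlocks₁₁_mul_transpose_add hg)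

/-- `X₁(t)` is upper triangular with unit diagonal (hence invertible of
determinant 1) and `A(t) = X₁(t)⁻¹ X₂(t)` is skew-symmetric. -/
theorem X1_triangular_and_Amat_skew (n : ℕ) (hn : 2 ≤ n) (t : ℕ → ℝ) :
    (∀ p q : Fin n, q < p → X1 n t p q = 0) ∧
    (∀ p : Fin n, X1 n t p p = 1) ∧
    (X1 n t).det = 1 ∧ IsUnit (X1 n t) ∧ (Amat n t)ᵀ = -(Amat n t) :=
  X1_triangular_and_Amat_skew_general n t
end
end

section
/- For all v, w ∈ W, the left cosets W_{[n−1]}·v and W_{[n−1]}·w are equal if and only if I_v = I_w. Moreover, for every subset S ⊆ {1,…,n} of even size there exists w ∈ W with I_w = S. Consequently, the map w ↦ I_w induces a bijection between the cosets W_{[n−1]}\W and the subsets of {1,…,n} of even size. -/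
noncomputable section

open Matrix

/-! Write `Fin (2 * n)` as two copies of `Fin n`. Every element of `W` commutes with the
involution exchanging `i` and `n + i`, and `W_{[n-1]}` is the image of `S_n` acting diagonally
on both copies, since adjacent transpositions generate `S_n`; this image consists exactly of the
permutations that commute with the involution and preserve the first copy. For `v, w ∈ W` the
quotient `w v⁻¹` commutes with the involution automatically, and it preserves the first copy
iff `v` and `w` send the same points of the first copy into the second, i.e. iff `I_v = I_w`.
An even set `S` is `I_w` for the element of `W` exchanging `i` and `n + i` for `i ∈ S`. -/

open Equiv

section Halves

variable {n : ℕ}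

def halvesEquiv (n : ℕ) : Fin n ⊕ Fin n ≃ Fin (2 * n) :=
  finSumFinEquiv.trans (finCongr (two_mul n).symm)

@[simp]
lemma val_halvesEquiv_inl (i : Fin n) : (halvesEquiv n (.inl i) : ℕ) = i := by
  simp [halvesEquiv]

@[simp]
lemma val_halvesEquiv_inr (i : Fin n) : (halvesEquiv n (.inr i) : ℕ) = n + i := by
  simp [halvesEquiv, add_comm]

lemma halvesEquiv_inl (i : Fin n) : halvesEquiv n (.inl i) = ⟨i, by omega⟩ :=
  Fin.ext (val_halvesEquiv_inl i)

lemma halvesEquiv_inr (i : Fin n) : halvesEquiv n (.inr i) = ⟨n + i, by omega⟩ :=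
  Fin.ext (val_halvesEquiv_inr i)

lemma halvesEquiv_lt_iff (x : Fin n ⊕ Fin n) : (halvesEquiv n x : ℕ) < n ↔ x.isLeft := by
  rcases x with i | i <;> simp

def swapHalves (n : ℕ) : Perm (Fin (2 * n)) :=
  (halvesEquiv n).permCongr (Equiv.sumComm _ _)

@[simp]
lemma swapHalves_apply_halvesEquiv (x : Fin n ⊕ Fin n) :
    swapHalves n (halvesEquiv n x) = halvesEquiv n x.swap := by
  simp [swapHalves, Equiv.permCongr_apply]

@[simp]
lemma swapHalves_swapHalves (x : Fin (2 * n)) : swapHalves n (swapHalves n x) = x := by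
  obtain ⟨x, rfl⟩ := (halvesEquiv n).surjective x
  simp

lemma swapHalves_lt_iff (x : Fin (2 * n)) : (swapHalves n x : ℕ) < n ↔ n ≤ x := by
  obtain ⟨x, rfl⟩ := (halvesEquiv n).surjective x
  rcases x with i | i <;> simp

lemma modEq_iff_eq_swapHalves (x y : Fin (2 * n)) :
    (x : ℕ) ≡ n + y [MOD 2 * n] ↔ x = swapHalves n y := by
  obtain ⟨y, rfl⟩ := (halvesEquiv n).surjective y
  rw [Nat.ModEq, Nat.mod_eq_of_lt x.isLt, Fin.ext_iff]
  rcases y with i | i <;> simp only [swapHalves_apply_halvesEquiv, Sum.swap_inl, Sum.swap_inr,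
    val_halvesEquiv_inl, val_halvesEquiv_inr]
  · rw [Nat.mod_eq_of_lt (by omega)]
  · rw [show n + (n + (i : ℕ)) = i + 2 * n by ring, Nat.add_mod_right, Nat.mod_eq_of_lt (by omega)]

def doubling (n : ℕ) : Perm (Fin n) →* Perm (Fin (2 * n)) :=
  (halvesEquiv n).permCongrHom.toMonoidHom.comp
    ((Perm.sumCongrHom _ _).comp ((MonoidHom.id _).prod (MonoidHom.id _)))

@[simp]
lemma doubling_apply_halvesEquiv (τ : Perm (Fin n)) (x : Fin n ⊕ Fin n) :
    doubling n τ (halvesEquiv n x) = halvesEquiv n (Sum.map τ τ x) := by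
  simp [doubling, Equiv.permCongr_apply]

lemma mem_range_doubling_iff {σ : Perm (Fin (2 * n))} :
    σ ∈ (doubling n).range ↔
      Commute σ (swapHalves n) ∧ ∀ x, ((σ x : ℕ) < n ↔ (x : ℕ) < n) := by
  constructor
  · rintro ⟨τ, rfl⟩
    refine ⟨Equiv.ext fun x => ?_, fun x => ?_⟩ <;>
      obtain ⟨x, rfl⟩ := (halvesEquiv n).surjective x <;> rcases x with i | i <;> simp
  · rintro ⟨hcomm, hlt⟩
    have hmaps : Set.MapsTo ((halvesEquiv n).symm.permCongr σ) (Set.range Sum.inl)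
        (Set.range Sum.inl) := by
      rintro _ ⟨i, rfl⟩
      have hleft : ((halvesEquiv n).symm (σ (halvesEquiv n (.inl i)))).isLeft := by
        rw [← halvesEquiv_lt_iff, Equiv.apply_symm_apply, hlt]
        simp
      obtain ⟨j, hj⟩ := Sum.isLeft_iff.1 hleft
      exact ⟨j, by simpa [Equiv.permCongr_apply] using hj.symm⟩
    obtain ⟨⟨a, b⟩, hab⟩ := Perm.mem_sumCongrHom_range_of_perm_mapsTo_inl hmaps
    have hσ : ∀ x, σ (halvesEquiv n x) = halvesEquiv n (Sum.map a b x) := fun x => by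
      simpa [Equiv.permCongr_apply] using congrArg (halvesEquiv n ∘ (· x)) hab.symm
    have hba : b = a := Equiv.ext fun i => by
      simpa [hσ] using congrArg (· (halvesEquiv n (.inl i))) hcomm
    exact ⟨a, Equiv.ext fun x => by
      obtain ⟨x, rfl⟩ := (halvesEquiv n).surjective x
      simp [hσ, hba]⟩

lemma sGen_succ_eq_doubling {m : ℕ} (i : Fin m) :
    sGen (m + 1) (i + 1) = doubling (m + 1) (swap i.castSucc i.succ) := by
  have hi := i.isLt
  rw [sGen, dif_pos ⟨by omega, by omega, by omega⟩]
  refine Equiv.ext fun x => ?_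
  obtain ⟨x, rfl⟩ := (halvesEquiv (m + 1)).surjective x
  rw [Fin.ext_iff]
  rcases x with j | j <;>
    simp only [Perm.mul_apply, swap_apply_def, doubling_apply_halvesEquiv, Sum.map_inl,
      Sum.map_inr, Fin.ext_iff, apply_ite Fin.val, val_halvesEquiv_inl, val_halvesEquiv_inr,
      Fin.val_castSucc, Fin.val_succ] <;>
    split_ifs <;> omega

lemma Wpar_eq_range_doubling (n : ℕ) : Wpar n = (doubling n).range := by
  rcases n with _ | m
  · ext σ
    obtain rfl : σ = 1 := Equiv.ext fun x => x.elim0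
    exact iff_of_true (one_mem _) (one_mem _)
  rw [MonoidHom.range_eq_map, ← Subgroup.closure_eq_top_of_mclosure_eq_top
    (Perm.mclosure_swap_castSucc_succ m), MonoidHom.map_closure, Wpar, ← Set.range_comp]
  congr 1
  ext σ
  constructor
  · rintro ⟨k, hk1, hkm, rfl⟩
    obtain ⟨i, rfl⟩ : ∃ i : Fin m, (i : ℕ) + 1 = k := ⟨⟨k - 1, by omega⟩, by simp; omega⟩
    exact ⟨i, (sGen_succ_eq_doubling i).symm⟩
  · rintro ⟨i, rfl⟩
    exact ⟨i + 1, by omega, by omega, (sGen_succ_eq_doubling i).symm⟩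

lemma mem_Iset_iff {σ : Perm (Fin (2 * n))} {i : Fin n} :
    i ∈ Iset n σ ↔ n ≤ (σ (halvesEquiv n (.inl i)) : ℕ) := by
  simp [Iset, halvesEquiv_inl]

lemma inW_iff {σ : Perm (Fin (2 * n))} :
    inW n σ ↔ (∀ i, σ (halvesEquiv n (.inr i)) = swapHalves n (σ (halvesEquiv n (.inl i)))) ∧
      Even (Iset n σ).card := by
  simp only [inW, modEq_iff_eq_swapHalves, halvesEquiv_inl, halvesEquiv_inr]
  rfl

lemma commute_swapHalves_of_inW {σ : Perm (Fin (2 * n))} (hσ : inW n σ) :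
    Commute σ (swapHalves n) := by
  refine Equiv.ext fun x => ?_
  obtain ⟨x, rfl⟩ := (halvesEquiv n).surjective x
  rcases x with i | i <;> simp [(inW_iff.1 hσ).1]

lemma Iset_eq_Iset_iff {v w : Perm (Fin (2 * n))} (hv : inW n v) (hw : inW n w) :
    Iset n v = Iset n w ↔ ∀ x, ((v x : ℕ) < n ↔ (w x : ℕ) < n) := by
  have hfst (hI : Iset n v = Iset n w) (i : Fin n) :
      (v (halvesEquiv n (.inl i)) : ℕ) < n ↔ (w (halvesEquiv n (.inl i)) : ℕ) < n := by
    simpa [mem_Iset_iff] using (Finset.ext_iff.1 hI i).not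
  refine ⟨fun hI x => ?_, fun h => Finset.ext fun i => ?_⟩
  · obtain ⟨x, rfl⟩ := (halvesEquiv n).surjective x
    rcases x with i | i
    · exact hfst hI i
    · simpa [(inW_iff.1 hv).1, (inW_iff.1 hw).1, swapHalves_lt_iff] using (hfst hI i).not
  · simpa [mem_Iset_iff] using (h (halvesEquiv n (.inl i))).not

lemma mul_inv_mem_range_doubling_iff {v w : Perm (Fin (2 * n))} (hv : inW n v) (hw : inW n w) :
    w * v⁻¹ ∈ (doubling n).range ↔ Iset n v = Iset n w := by
  rw [mem_range_doubling_iff, Iset_eq_Iset_iff hv hw,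
    and_iff_right ((commute_swapHalves_of_inW hw).mul_left (commute_swapHalves_of_inW hv).inv_left)]
  refine ⟨fun h y => ?_, fun h x => ?_⟩
  · simpa using (h (v y)).symm
  · simpa using (h (v⁻¹ x)).symm

def swapHalvesOn (S : Finset (Fin n)) : Perm (Fin (2 * n)) :=
  (halvesEquiv n).permCongr <|
    Function.Involutive.toPerm (fun x => if x.elim id id ∈ S then x.swap else x) <| by
      rintro (i | i) <;> by_cases hi : i ∈ S <;> simp [hi]

lemma swapHalvesOn_apply_inl (S : Finset (Fin n)) (i : Fin n) :
    swapHalvesOn S (halvesEquiv n (.inl i)) =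
      halvesEquiv n (if i ∈ S then .inr i else .inl i) := by
  by_cases hi : i ∈ S <;> simp [swapHalvesOn, Equiv.permCongr_apply, Function.Involutive.toPerm, hi]

lemma swapHalvesOn_apply_inr (S : Finset (Fin n)) (i : Fin n) :
    swapHalvesOn S (halvesEquiv n (.inr i)) =
      halvesEquiv n (if i ∈ S then .inl i else .inr i) := by
  by_cases hi : i ∈ S <;> simp [swapHalvesOn, Equiv.permCongr_apply, Function.Involutive.toPerm, hi]

lemma Iset_swapHalvesOn (S : Finset (Fin n)) : Iset n (swapHalvesOn S) = S := by
  ext i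
  by_cases hi : i ∈ S <;> simp [mem_Iset_iff, swapHalvesOn_apply_inl, hi]

lemma inW_swapHalvesOn {S : Finset (Fin n)} (hS : Even S.card) : inW n (swapHalvesOn S) := by
  rw [inW_iff, Iset_swapHalvesOn]
  refine ⟨fun i => ?_, hS⟩
  by_cases hi : i ∈ S <;> simp [swapHalvesOn_apply_inl, swapHalvesOn_apply_inr, hi]

end Halves

theorem coset_bijection_Iset_general (n : ℕ) :
    (∀ v w : Equiv.Perm (Fin (2 * n)), inW n v → inW n w →
      ((fun u => u * v) '' (Wpar n : Set (Equiv.Perm (Fin (2 * n)))) =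
        (fun u => u * w) '' (Wpar n : Set (Equiv.Perm (Fin (2 * n)))) ↔
          Iset n v = Iset n w)) ∧
    (∀ S : Finset (Fin n), Even S.card →
      ∃ w : Equiv.Perm (Fin (2 * n)), inW n w ∧ Iset n w = S) := by
  refine ⟨fun v w hv hw => ?_, fun S hS =>
    ⟨swapHalvesOn S, inW_swapHalvesOn hS, Iset_swapHalvesOn S⟩⟩
  -- `op v • s` unfolds to the image of `s` under `(· * v)`
  refine (rightCoset_eq_iff (Wpar n)).trans ?_
  rw [Wpar_eq_range_doubling]
  exact mul_inv_mem_range_doubling_iff hv hw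

/-- For `v, w ∈ W`, the right cosets `W_{[n-1]}·v` and `W_{[n-1]}·w`
coincide iff `I_v = I_w`; and every subset of `{1,…,n}` of even size is `I_w` for some
`w ∈ W`. Hence `w ↦ I_w` induces a bijection between `W_{[n-1]}\W` and even subsets. -/
theorem coset_bijection_Iset (n : ℕ) (hn : 2 ≤ n) :
    (∀ v w : Equiv.Perm (Fin (2 * n)), inW n v → inW n w →
      ((fun u => u * v) '' (Wpar n : Set (Equiv.Perm (Fin (2 * n)))) =
        (fun u => u * w) '' (Wpar n : Set (Equiv.Perm (Fin (2 * n)))) ↔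
          Iset n v = Iset n w)) ∧
    (∀ S : Finset (Fin n), Even S.card →
      ∃ w : Equiv.Perm (Fin (2 * n)), inW n w ∧ Iset n w = S) :=
  coset_bijection_Iset_general n
end
end

section
/- Let A be the 4×4 real skew-symmetric matrix with above-diagonal entries a_{12} = 0, a_{13} = 0, a_{14} = 2, a_{23} = 1, a_{24} = 0, a_{34} = 2 (and a_{ji} = −a_{ij}). Then sgn(I,[4]) · Pf_I(A) ≥ 0 for every subset I ⊆ {1,2,3,4} of even size, yet A does not lie in the Euclidean closure of S_4^{>0} in the space of 4×4 real matrices. In particular, the Pfaffian sign pattern of totally positive skew-symmetric matrices does not characterize total nonnegativity. -/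
noncomputable section

open Matrix

/-! On the parametrization `t ↦ A(t)`, the minor with rows `{1, 2}` and columns `{3, 4}`
equals `t₁² t₂ t₃ t₄ t₅ ≥ 0`; being continuous, it stays nonnegative on the closure of
`S₄^{>0}`, whereas for the given matrix it is `-2`. The Pfaffian sign pattern is a direct
computation: the nonzero Pfaffians are `Pf_{14} = Pf_{34} = Pf_{1234} = 2` and `Pf_{23} = 1`,
all with sign `+1`. -/

theorem Matrix.single_mul_apply {l m k α : Type*} [Fintype m] [DecidableEq l] [DecidableEq m]
    [NonUnitalNonAssocSemiring α] (a : l) (b : m) (c : α) (M : Matrix m k α) (p : l) (q : k) :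
    (single a b c * M) p q = if p = a then c * M b q else 0 := by
  split_ifs with h
  · subst h
    exact single_mul_apply_same _ _ _ _ _
  · exact single_mul_apply_of_ne _ _ _ _ _ h _

section Parametrization

variable {n : ℕ}

theorem xMat_of_lt {i : ℕ} (hi : 1 ≤ i) (hin : i < n) (t : ℝ) :
    xMat n i t = 1 + single ⟨i - 1, by omega⟩ ⟨i, by omega⟩ t
      - single ⟨n + i, by omega⟩ ⟨n + i - 1, by omega⟩ t := by
  ext p q
  simp only [xMat, of_apply, if_pos hin, Matrix.add_apply, Matrix.sub_apply, one_apply,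
    single_apply, Fin.ext_iff]
  split_ifs <;> first | omega | ring

theorem xMat_self (hn : 2 ≤ n) (t : ℝ) :
    xMat n n t = 1 + single ⟨n - 2, by omega⟩ ⟨2 * n - 1, by omega⟩ t
      - single ⟨n - 1, by omega⟩ ⟨2 * n - 2, by omega⟩ t := by
  ext p q
  simp only [xMat, of_apply, lt_irrefl, if_false, Matrix.add_apply, Matrix.sub_apply, one_apply,
    single_apply, Fin.ext_iff]
  split_ifs <;> first | omega | ring

theorem xMat_mul_apply_of_lt {i : ℕ} (hi : 1 ≤ i) (hin : i < n) (t : ℝ)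
    (M : Matrix (Fin (2 * n)) (Fin (2 * n)) ℝ) (p q : Fin (2 * n)) :
    (xMat n i t * M) p q = M p q + (if (p : ℕ) + 1 = i then t * M ⟨i, by omega⟩ q else 0)
      - (if (p : ℕ) = n + i then t * M ⟨n + i - 1, by omega⟩ q else 0) := by
  simp only [xMat_of_lt hi hin, add_mul, sub_mul, one_mul, Matrix.add_apply, Matrix.sub_apply,
    single_mul_apply]
  split_ifs <;> simp_all [Fin.ext_iff] <;> omega

theorem xMat_self_mul_apply (hn : 2 ≤ n) (t : ℝ)
    (M : Matrix (Fin (2 * n)) (Fin (2 * n)) ℝ) (p q : Fin (2 * n)) :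
    (xMat n n t * M) p q =
      M p q + (if (p : ℕ) + 2 = n then t * M ⟨2 * n - 1, by omega⟩ q else 0)
      - (if (p : ℕ) + 1 = n then t * M ⟨2 * n - 2, by omega⟩ q else 0) := by
  simp only [xMat_self hn, add_mul, sub_mul, one_mul, Matrix.add_apply, Matrix.sub_apply,
    single_mul_apply]
  split_ifs <;> simp_all [Fin.ext_iff] <;> omega

end Parametrization

theorem prodX_four (t : ℕ → ℝ) : prodX 4 t =
    xMat 4 4 (t 0) * (xMat 4 2 (t 1) * (xMat 4 1 (t 2) *
      (xMat 4 3 (t 3) * (xMat 4 2 (t 4) * xMat 4 4 (t 5))))) := by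
  simp [prodX, show Npar 4 = 6 from rfl, show wordD 4 = [4, 2, 1, 3, 2, 4] from rfl,
    List.range_succ]

theorem X1_four (t : ℕ → ℝ) : X1 4 t =
    !![1, t 2, t 2 * t 4, 0;
       0, 1, t 4 + t 1, t 1 * t 3;
       0, 0, 1, t 3;
       0, 0, 0, 1] := by
  ext p q
  fin_cases p <;> fin_cases q <;>
    simp only [X1, of_apply, prodX_four, xMat_self_mul_apply (n := 4) (by norm_num),
      xMat_mul_apply_of_lt (n := 4) (i := 1) le_rfl (by norm_num),
      xMat_mul_apply_of_lt (n := 4) (i := 2) (by norm_num) (by norm_num),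
      xMat_mul_apply_of_lt (n := 4) (i := 3) (by norm_num) (by norm_num)] <;>
    simp [xMat]

theorem X2_four (t : ℕ → ℝ) : X2 4 t =
    !![0, 0, 0, t 2 * t 4 * t 5;
       0, 0, -(t 1 * t 3 * t 5), t 4 * t 5 + t 1 * t 5;
       0, t 0 * t 3 * t 4, -(t 3 * t 5) - t 0 * t 3, t 5 + t 0;
       -(t 0 * t 1 * t 2), t 0 * t 4 + t 0 * t 1, -t 5 - t 0, 0] := by
  ext p q
  fin_cases p <;> fin_cases q <;>
    simp only [X2, of_apply, prodX_four, xMat_self_mul_apply (n := 4) (by norm_num),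
      xMat_mul_apply_of_lt (n := 4) (i := 1) le_rfl (by norm_num),
      xMat_mul_apply_of_lt (n := 4) (i := 2) (by norm_num) (by norm_num),
      xMat_mul_apply_of_lt (n := 4) (i := 3) (by norm_num) (by norm_num)] <;>
    simp [xMat] <;> ring

theorem Amat_four (t : ℕ → ℝ) : Amat 4 t =
    !![0, t 0 * t 1 * t 2 * t 3 * t 4, -(t 0 * t 1 * t 2 * t 3), t 0 * t 1 * t 2;
       -(t 0 * t 1 * t 2 * t 3 * t 4), 0, t 0 * t 1 * t 3, -(t 0 * t 4) - t 0 * t 1;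
       t 0 * t 1 * t 2 * t 3, -(t 0 * t 1 * t 3), 0, t 5 + t 0;
       -(t 0 * t 1 * t 2), t 0 * t 4 + t 0 * t 1, -t 5 - t 0, 0] := by
  have hdet : (X1 4 t).det = 1 := by
    simp [X1_four, det_succ_row_zero, Fin.sum_univ_succ]
  have := invertibleOfIsUnitDet (X1 4 t) (by simp [hdet])
  rw [Amat, inv_mul_eq_iff_eq_mul_of_invertible, X1_four, X2_four]
  ext p q
  fin_cases p <;> fin_cases q <;> simp [mul_apply, Fin.sum_univ_four] <;> ring

theorem det_submatrix_Amat_four (t : ℕ → ℝ) :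
    ((Amat 4 t).submatrix ![0, 1] ![2, 3]).det = t 0 ^ 2 * t 1 * t 2 * t 3 * t 4 := by
  rw [Amat_four, det_fin_two]
  simp
  ring

theorem det_submatrix_nonneg_of_mem_closure_Spos {B : Matrix (Fin 4) (Fin 4) ℝ}
    (hB : B ∈ closure (Spos 4)) : 0 ≤ (B.submatrix ![0, 1] ![2, 3]).det := by
  have hSpos : Spos 4 ⊆ {B | 0 ≤ (B.submatrix ![0, 1] ![2, 3]).det} := by
    rintro _ ⟨t, ht, rfl⟩
    obtain ⟨h1, h2, h3, h4⟩ : 0 < t 1 ∧ 0 < t 2 ∧ 0 < t 3 ∧ 0 < t 4 :=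
      ⟨ht 1 (by decide), ht 2 (by decide), ht 3 (by decide), ht 4 (by decide)⟩
    rw [Set.mem_ofPred_eq, det_submatrix_Amat_four]
    positivity
  refine closure_minimal hSpos (isClosed_le continuous_const ?_) hB
  exact (continuous_id.matrix_submatrix _ _).matrix_det

section Pfaffian

open Equiv Equiv.Perm

theorem Fintype.sum_perm_fin_succ {M : Type*} [AddCommMonoid M] {n : ℕ}
    (f : Perm (Fin (n + 1)) → M) :
    ∑ σ, f σ = ∑ p : Fin (n + 1), ∑ e : Perm (Fin n), f (decomposeFin.symm (p, e)) := by
  rw [Finset.univ_perm_fin_succ, Finset.sum_map, Fintype.sum_prod_type]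
  rfl

theorem Equiv.Perm.decomposeFin_symm_apply_of_ne_zero {n : ℕ} (p : Fin (n + 1))
    (e : Perm (Fin n)) {i : Fin (n + 1)} (hi : i ≠ 0) :
    decomposeFin.symm (p, e) i = swap 0 p (e (i.pred hi)).succ := by
  conv_lhs => rw [← Fin.succ_pred i hi]
  exact decomposeFin_symm_apply_succ _ _ _

theorem Pfaff_fin_zero (B : Matrix (Fin 0) (Fin 0) ℝ) : Pfaff B = 1 := by
  simp [Pfaff]

theorem Pfaff_fin_two {B : Matrix (Fin 2) (Fin 2) ℝ} (hB : Bᵀ = -B) : Pfaff B = B 0 1 := by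
  have h10 : B 1 0 = -B 0 1 := by simpa using congrFun (congrFun hB 0) 1
  simp [Pfaff, Fintype.sum_perm_fin_succ, Fin.sum_univ_succ, decomposeFin.symm_sign, h10]
  ring

theorem Pfaff_fin_four {B : Matrix (Fin 4) (Fin 4) ℝ} (hB : Bᵀ = -B) :
    Pfaff B = B 0 1 * B 2 3 - B 0 2 * B 1 3 + B 0 3 * B 1 2 := by
  have skew : ∀ i j, B j i = -B i j := fun i j => by simpa using congrFun (congrFun hB i) j
  simp only [Pfaff, Fintype.sum_perm_fin_succ, Fin.sum_univ_succ, Fin.sum_univ_zero]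
  simp [Fin.prod_univ_two, decomposeFin.symm_sign, decomposeFin_symm_apply_of_ne_zero,
    swap_apply_def, skew 0 1, skew 0 2, skew 0 3, skew 1 2, skew 1 3, skew 2 3]
  ring

theorem PfI_eq_Pfaff_submatrix {n k : ℕ} (A : Matrix (Fin n) (Fin n) ℝ) {I : Finset (Fin n)}
    (hI : I.card = k) {f : Fin k → Fin n} (hfI : ∀ i, f i ∈ I) (hf : StrictMono f) :
    PfI A I = Pfaff (A.submatrix f f) := by
  subst hI
  obtain rfl := Finset.orderEmbOfFin_unique rfl hfI hf
  rfl

theorem PfI_empty {n : ℕ} (A : Matrix (Fin n) (Fin n) ℝ) : PfI A ∅ = 1 :=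
  Pfaff_fin_zero _

theorem PfI_univ {n : ℕ} (A : Matrix (Fin n) (Fin n) ℝ) : PfI A Finset.univ = Pfaff A :=
  PfI_eq_Pfaff_submatrix A (Finset.card_fin n) (fun _ => Finset.mem_univ _) strictMono_id

theorem PfI_pair {n : ℕ} {A : Matrix (Fin n) (Fin n) ℝ} (hA : Aᵀ = -A) {i j : Fin n}
    (hij : i < j) : PfI A {i, j} = A i j := by
  rw [PfI_eq_Pfaff_submatrix A (Finset.card_pair hij.ne) (f := ![i, j]) (by simp)
    (by simpa [StrictMono, Fin.forall_fin_two] using hij), Pfaff_fin_two]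
  · rfl
  · rw [transpose_submatrix, hA]
    rfl

end Pfaffian

theorem Finset.eq_empty_or_pair_or_univ_of_even_card {I : Finset (Fin 4)} (hI : Even I.card) :
    I = ∅ ∨ (∃ i j, i < j ∧ I = {i, j}) ∨ I = Finset.univ := by
  have hle : I.card ≤ 4 := by simpa using I.card_le_univ
  obtain h | h | h : I.card = 0 ∨ I.card = 2 ∨ I.card = 4 := by
    obtain ⟨k, hk⟩ := hI
    omega
  · exact Or.inl (Finset.card_eq_zero.mp h)
  · obtain ⟨i, j, hij, rfl⟩ := Finset.card_eq_two.mp h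
    rcases hij.lt_or_gt with hlt | hgt
    · exact Or.inr (Or.inl ⟨i, j, hlt, rfl⟩)
    · exact Or.inr (Or.inl ⟨j, i, hgt, Finset.pair_comm i j⟩)
  · exact Or.inr (Or.inr (Finset.eq_univ_of_card I (by simpa using h)))

def pfaffianCounterexample : Matrix (Fin 4) (Fin 4) ℝ :=
  !![0, 0, 0, 2; 0, 0, 1, 0; 0, -1, 0, 2; -2, 0, -2, 0]

theorem transpose_pfaffianCounterexample : pfaffianCounterexampleᵀ = -pfaffianCounterexample := by
  ext i j
  fin_cases i <;> fin_cases j <;> simp [pfaffianCounterexample]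

theorem sgnSet_mul_PfI_pfaffianCounterexample_nonneg {I : Finset (Fin 4)} (hI : Even I.card) :
    0 ≤ sgnSet I * PfI pfaffianCounterexample I := by
  rcases Finset.eq_empty_or_pair_or_univ_of_even_card hI with rfl | ⟨i, j, hij, rfl⟩ | rfl
  · simp [sgnSet, PfI_empty]
  · rw [PfI_pair transpose_pfaffianCounterexample hij]
    fin_cases i <;> fin_cases j <;> simp [sgnSet, pfaffianCounterexample, Nat.even_iff] at hij ⊢
  · rw [PfI_univ, Pfaff_fin_four transpose_pfaffianCounterexample]
    simp [sgnSet, pfaffianCounterexample, Fin.sum_univ_four]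

theorem det_submatrix_pfaffianCounterexample :
    (pfaffianCounterexample.submatrix ![0, 1] ![2, 3]).det = -2 := by
  rw [det_fin_two]
  simp [pfaffianCounterexample, cons_val]

/-- The given `4 × 4` skew-symmetric matrix satisfies the Pfaffian sign
pattern `sgn(I,[4])·Pf_I(A) ≥ 0` for all even `I` but is not totally nonnegative. -/
theorem pfaffian_signs_not_sufficient (A : Matrix (Fin 4) (Fin 4) ℝ)
    (hA : A = !![0, 0, 0, 2; 0, 0, 1, 0; 0, -1, 0, 2; -2, 0, -2, 0]) :
    (∀ I : Finset (Fin 4), Even I.card → 0 ≤ sgnSet I * PfI A I) ∧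
      A ∉ closure (Spos 4) := by
  obtain rfl : A = pfaffianCounterexample := hA
  refine ⟨fun I hI => sgnSet_mul_PfI_pfaffianCounterexample_nonneg hI, fun hA => ?_⟩
  have := det_submatrix_nonneg_of_mem_closure_Spos hA
  rw [det_submatrix_pfaffianCounterexample] at this
  norm_num at this
end
end
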